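/- Let m ≥ 2, let A ⊆ ℕ^m, and define A_0 = {(a_1, …, a_{m−1}) ∈ ℕ^{m−1} : (a_1, …, a_{m−1}, 0) ∈ A} and A_1 = {(a_1, …, a_{m−1}, a') ∈ ℕ^m : (a_1, …, a_{m−1}, a' + 1) ∈ A, or a' = 0 and (a_1, …, a_{m−1}, 0) ∈ A}. Then for every s ∈ ℕ with s ≥ w_m, Card V_A^{(w)}(s) = Card V_{A_0}^{(w')}(s) + Card V_{A_1}^{(w)}(s − w_m), where w' = (w_1, …, w_{m−1}) and V_{A_0}^{(w')}(s) is taken inside ℕ^{m−1}. -/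
import Mathlib


/-- The weighted order of a point `a ∈ ℕ^m`: `ord_w a = w₁a₁ + ⋯ + w_m a_m`. -/
def ordw {m : ℕ} (w : Fin m → ℕ) (a : Fin m → ℕ) : ℕ := ∑ i, w i * a i

/-- `V_A`: the set of `v ∈ ℕ^m` that do not exceed (w.r.t. the product order)
any element of `A`. -/
def VA {m : ℕ} (A : Set (Fin m → ℕ)) : Set (Fin m → ℕ) := {v | ∀ a ∈ A, ¬ a ≤ v}

/-- `V_A^{(w)}(r)`: elements of `V_A` of weighted order at most `r`. -/
def VAw {m : ℕ} (w : Fin m → ℕ) (A : Set (Fin m → ℕ)) (r : ℕ) : Set (Fin m → ℕ) :=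
  {v ∈ VA A | ordw w v ≤ r}

lemma ordw_split {m : ℕ} (w : Fin (m+1) → ℕ) (v : Fin (m+1) → ℕ) :
    ordw w v = ordw (fun i : Fin m => w i.castSucc) (Fin.init v)
      + w (Fin.last m) * v (Fin.last m) := by
  simp [ordw, Fin.sum_univ_castSucc, Fin.init]

lemma finite_VAw {n : ℕ} (w : Fin n → ℕ) (hw : ∀ i, 0 < w i)
    (A : Set (Fin n → ℕ)) (r : ℕ) : (VAw w A r).Finite := by
  apply Set.Finite.subset (Set.Finite.pi (fun i : Fin n => Set.finite_Iic r))
  intro v hv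
  simp only [Set.mem_pi, Set.mem_univ, Set.mem_Iic, forall_true_left]
  intro i
  calc v i ≤ w i * v i := Nat.le_mul_of_pos_left _ (hw i)
    _ ≤ ordw w v :=
      Finset.single_le_sum (f := fun j => w j * v j)
        (fun j _ => Nat.zero_le _) (Finset.mem_univ i)
    _ ≤ r := hv.2


/-- The recursion for `Card V_A^{(w)}`: writing the ambient dimension as `m + 1 ≥ 2`,
with `A₀ = {(a₁,…,a_m) : (a₁,…,a_m,0) ∈ A}` (a subset of `ℕ^m`) and
`A₁ = {(a₁,…,a_m,a') : (a₁,…,a_m,a'+1) ∈ A, or a' = 0 and (a₁,…,a_m,0) ∈ A}`,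
one has, for every `s ≥ w_{m+1}`,
`Card V_A^{(w)}(s) = Card V_{A₀}^{(w')}(s) + Card V_{A₁}^{(w)}(s - w_{m+1})`
where `w' = (w₁,…,w_m)`. -/
theorem card_VAw_recursion
    (m : ℕ) (hm : 1 ≤ m) (w : Fin (m + 1) → ℕ) (hw : ∀ i, 0 < w i)
    (A : Set (Fin (m + 1) → ℕ)) (s : ℕ) (hs : w (Fin.last m) ≤ s) :
    Set.ncard (VAw w A s)
      = Set.ncard (VAw (fun i : Fin m => w i.castSucc)
          {a : Fin m → ℕ | Fin.snoc a 0 ∈ A} s)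
        + Set.ncard (VAw w
            {b : Fin (m + 1) → ℕ |
              Function.update b (Fin.last m) (b (Fin.last m) + 1) ∈ A ∨
                (b (Fin.last m) = 0 ∧ b ∈ A)}
            (s - w (Fin.last m))) := by
  classical
  set w' : Fin m → ℕ := fun i => w i.castSucc with hw'def
  set A₀ : Set (Fin m → ℕ) := {a | Fin.snoc a 0 ∈ A} with hA₀
  set A₁ : Set (Fin (m+1) → ℕ) :=
    {b | Function.update b (Fin.last m) (b (Fin.last m) + 1) ∈ A ∨
      (b (Fin.last m) = 0 ∧ b ∈ A)} with hA₁
  have hfin : (VAw w A s).Finite := finite_VAw w hw A s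
  have key : VAw w A s
      = {v ∈ VAw w A s | v (Fin.last m) = 0} ∪ {v ∈ VAw w A s | v (Fin.last m) ≠ 0} := by
    ext v; by_cases h : v (Fin.last m) = 0 <;> simp [h]
  have hdisj : Disjoint {v ∈ VAw w A s | v (Fin.last m) = 0}
      {v ∈ VAw w A s | v (Fin.last m) ≠ 0} := by
    rw [Set.disjoint_left]
    rintro v ⟨_, h0⟩ ⟨_, h1⟩
    exact h1 h0
  rw [key, Set.ncard_union_eq hdisj (hfin.subset (fun v hv => hv.1))
    (hfin.subset (fun v hv => hv.1))]
  congr 1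
  · -- zero-last-coordinate part
    have himg : {v ∈ VAw w A s | v (Fin.last m) = 0}
        = (fun a : Fin m → ℕ => Fin.snoc a 0) '' VAw w' A₀ s := by
      ext v
      constructor
      · rintro ⟨⟨hvVA, hvord⟩, hv0⟩
        refine ⟨Fin.init v, ⟨?_, ?_⟩, ?_⟩
        · intro c hc hle
          apply hvVA (Fin.snoc c 0) hc
          intro i
          refine Fin.lastCases ?_ (fun j => ?_) i
          · simp [hv0]
          · simpa [Fin.init] using hle j
        · have := ordw_split w v
          rw [hv0, mul_zero, add_zero] at this
          rw [← this]; exact hvord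
        · rw [← hv0]; exact Fin.snoc_init_self v
      · rintro ⟨a, ⟨haVA, haord⟩, rfl⟩
        refine ⟨⟨?_, ?_⟩, by simp⟩
        · intro b hb hle
          have hbL : b (Fin.last m) = 0 := Nat.le_zero.mp (by simpa using hle (Fin.last m))
          apply haVA (Fin.init b)
          · show Fin.snoc (Fin.init b) 0 ∈ A
            rw [← hbL, Fin.snoc_init_self]; exact hb
          · intro j
            simpa [Fin.init] using hle j.castSucc
        · rw [ordw_split]
          simpa using haord
    have hinj : Function.Injective (fun a : Fin m → ℕ => (Fin.snoc a 0 : Fin (m+1) → ℕ)) := by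
      intro a a' h
      have := congrArg Fin.init h
      simpa [Fin.init_snoc] using this
    rw [himg, Set.ncard_image_of_injective _ hinj]
  · -- positive-last-coordinate part
    have himg : {v ∈ VAw w A s | v (Fin.last m) ≠ 0}
        = (fun b : Fin (m+1) → ℕ => Function.update b (Fin.last m) (b (Fin.last m) + 1))
          '' VAw w A₁ (s - w (Fin.last m)) := by
      ext v
      constructor
      · rintro ⟨⟨hvVA, hvord⟩, hv0⟩
        obtain ⟨k, hk⟩ : ∃ k, v (Fin.last m) = k + 1 :=
          ⟨v (Fin.last m) - 1,
            (Nat.succ_pred_eq_of_pos (Nat.pos_of_ne_zero hv0)).symm⟩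
        refine ⟨Function.update v (Fin.last m) k, ⟨?_, ?_⟩, ?_⟩
        · intro c hc hle
          rcases hc with hc | ⟨hc0, hcA⟩
          · apply hvVA _ hc
            intro i
            by_cases hi : i = Fin.last m
            · subst hi
              simp only [Function.update_self]
              have h1 : c (Fin.last m) ≤ k := by
                simpa using hle (Fin.last m)
              omega
            · simp only [Function.update_of_ne hi]
              simpa [Function.update_of_ne hi] using hle i
          · apply hvVA c hcA
            intro i
            by_cases hi : i = Fin.last m
            · subst hi; rw [hc0]; exact Nat.zero_le _
            · simpa [Function.update_of_ne hi] using hle i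
        · rw [Nat.le_sub_iff_add_le hs]
          have hov : ordw w v
              = ordw w (Function.update v (Fin.last m) k) + w (Fin.last m) := by
            rw [ordw_split w v, ordw_split w (Function.update v (Fin.last m) k)]
            have hinit : Fin.init (Function.update v (Fin.last m) k) = Fin.init v := by
              funext j
              simp [Fin.init, Function.update_of_ne (Fin.castSucc_lt_last j).ne]
            rw [hinit, Function.update_self, hk]
            ring
          omega
        · funext i
          by_cases hi : i = Fin.last m
          · subst hi; simp [hk]
          · simp [Function.update_of_ne hi]
      · rintro ⟨b, ⟨hbVA, hbord⟩, rfl⟩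
        refine ⟨⟨?_, ?_⟩, by simp⟩
        · intro a ha hle
          by_cases haL : a (Fin.last m) = 0
          · apply hbVA a (Or.inr ⟨haL, ha⟩)
            intro i
            by_cases hi : i = Fin.last m
            · subst hi; rw [haL]; exact Nat.zero_le _
            · simpa [Function.update_of_ne hi] using hle i
          · obtain ⟨k, hk⟩ : ∃ k, a (Fin.last m) = k + 1 :=
              ⟨a (Fin.last m) - 1,
                (Nat.succ_pred_eq_of_pos (Nat.pos_of_ne_zero haL)).symm⟩
            have hca : Function.update (Function.update a (Fin.last m) k) (Fin.last m)
                (Function.update a (Fin.last m) k (Fin.last m) + 1) = a := by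
              rw [Function.update_idem, Function.update_self, ← hk, Function.update_eq_self]
            apply hbVA (Function.update a (Fin.last m) k) (Or.inl (by rw [hca]; exact ha))
            intro i
            by_cases hi : i = Fin.last m
            · subst hi
              have h1 : a (Fin.last m) ≤ b (Fin.last m) + 1 := by
                simpa using hle (Fin.last m)
              simp only [Function.update_self]
              omega
            · simp only [Function.update_of_ne hi]
              simpa [Function.update_of_ne hi] using hle i
        · have hov : ordw w (Function.update b (Fin.last m) (b (Fin.last m) + 1))
              = ordw w b + w (Fin.last m) := by
            rw [ordw_split w (Function.update b (Fin.last m) (b (Fin.last m) + 1)),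
              ordw_split w b]
            have hinit : Fin.init (Function.update b (Fin.last m) (b (Fin.last m) + 1))
                = Fin.init b := by
              funext j
              simp [Fin.init, Function.update_of_ne (Fin.castSucc_lt_last j).ne]
            rw [hinit, Function.update_self]
            ring
          show ordw w (Function.update b (Fin.last m) (b (Fin.last m) + 1)) ≤ s
          omega
    have hinj : Set.InjOn
        (fun b : Fin (m+1) → ℕ => Function.update b (Fin.last m) (b (Fin.last m) + 1))
        (VAw w A₁ (s - w (Fin.last m))) := by
      intro b _ b' _ h
      funext i
      by_cases hi : i = Fin.last m
      · subst hi
        have := congrFun h (Fin.last m)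
        simpa using this
      · have := congrFun h i
        simpa [Function.update_of_ne hi] using this
    rw [himg, Set.ncard_image_of_injOn hinj]
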